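/- arXiv:2203.12607 — 2 statements merged into one kernel-verified Lean document; each statement's English description precedes it below -/
import Mathlib

section
/- For every μ > 0, m ∈ ℝ and n ∈ ℕ, the Fisher information of the n-th harmonic oscillator eigenfunction satisfies I_F[ψ_n] = 4·∫_{−∞}^{∞} (ψ_n'(x))² dx = (4n+2)·μ. -/
open MeasureTheory Real

/-- The n-th physicists' Hermite polynomial (as a real function). -/
noncomputable def hermiteH : ℕ → ℝ → ℝ
  | 0, _ => 1
  | 1, x => 2 * x
  | (n + 2), x => 2 * x * hermiteH (n + 1) x - 2 * (n + 1) * hermiteH n x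

/-- The n-th harmonic oscillator eigenfunction. -/
noncomputable def ψ (μ m : ℝ) (n : ℕ) (x : ℝ) : ℝ :=
  Real.sqrt (Real.sqrt μ / (2 ^ n * n.factorial * Real.sqrt Real.pi)) *
    Real.exp (-(μ * (x - m) ^ 2) / 2) * hermiteH n (Real.sqrt μ * (x - m))

open Polynomial Filter Topology

/-- Physicists' Hermite polynomials as `Polynomial ℝ`. -/
noncomputable def PH : ℕ → Polynomial ℝ
  | 0 => 1
  | 1 => 2 * X
  | (n + 2) => 2 * X * PH (n + 1) - ((2 * (n + 1) : ℕ) : ℝ[X]) * PH n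

lemma PH_deriv : ∀ n : ℕ, (PH (n + 1)).derivative = ((2 * (n + 1) : ℕ) : ℝ[X]) * PH n
  | 0 => by
      show derivative (2 * X) = _
      simp [PH]
  | 1 => by
      show derivative (2 * X * PH 1 - ((2 * 1 : ℕ) : ℝ[X]) * PH 0) = _
      simp [PH]
      ring
  | (n + 2) => by
      have h1 := PH_deriv n
      have h2 := PH_deriv (n + 1)
      rw [show n + 1 + 1 = n + 2 from rfl] at h2
      show derivative (2 * X * PH (n + 2) - ((2 * (n + 2) : ℕ) : ℝ[X]) * PH (n + 1)) = _
      rw [derivative_sub, derivative_mul, derivative_mul, derivative_mul, h1, h2,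
        show PH (n + 2) = 2 * X * PH (n + 1) - ((2 * (n + 1) : ℕ) : ℝ[X]) * PH n from rfl]
      push_cast
      simp [derivative_natCast]
      ring

lemma PH_succ (n : ℕ) : PH (n + 1) = 2 * X * PH n - (PH n).derivative := by
  cases n with
  | zero =>
      show (2 * X : ℝ[X]) = 2 * X * 1 - derivative 1
      simp
  | succ k =>
      rw [PH_deriv k]
      show 2 * X * PH (k + 1) - ((2 * (k + 1) : ℕ) : ℝ[X]) * PH k = _
      ring

lemma hermiteH_eq : ∀ (n : ℕ) (x : ℝ), hermiteH n x = (PH n).eval x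
  | 0, _ => by simp [hermiteH, PH]
  | 1, x => by
      show 2 * x = eval x (2 * X)
      simp
  | (n + 2), x => by
      rw [show hermiteH (n+2) x = 2 * x * hermiteH (n + 1) x - 2 * (n + 1) * hermiteH n x from rfl,
        hermiteH_eq (n+1) x, hermiteH_eq n x,
        show PH (n+2) = 2 * X * PH (n + 1) - ((2 * (n + 1) : ℕ) : ℝ[X]) * PH n from rfl]
      push_cast
      simp

lemma tendsto_poly_gauss_gen (Q : ℝ[X]) (c : ℝ) :
    Tendsto (fun x : ℝ => Q.eval x * Real.exp (c * x - x ^ 2)) atTop (𝓝 0) := by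
  apply squeeze_zero_norm' (a := fun x : ℝ => |Q.eval x / Real.exp x|)
  · filter_upwards [eventually_ge_atTop (|c| + 1)] with x hx
    have hx0 : 0 ≤ x := le_trans (by positivity) hx
    have h1 : Real.exp (c * x - x ^ 2) ≤ Real.exp (-x) := by
      apply Real.exp_le_exp.mpr
      nlinarith [abs_nonneg c, le_abs_self c, neg_abs_le c]
    rw [Real.norm_eq_abs, abs_mul, abs_div, Real.abs_exp, Real.abs_exp, div_eq_mul_inv,
      ← Real.exp_neg]
    exact mul_le_mul_of_nonneg_left h1 (abs_nonneg _)
  · simpa using (Q.tendsto_div_exp_atTop).abs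

lemma tendsto_poly_gauss_atTop (Q : ℝ[X]) :
    Tendsto (fun x : ℝ => Q.eval x * Real.exp (-x ^ 2)) atTop (𝓝 0) := by
  simpa using tendsto_poly_gauss_gen Q 0

lemma tendsto_poly_gauss_atBot (Q : ℝ[X]) :
    Tendsto (fun x : ℝ => Q.eval x * Real.exp (-x ^ 2)) atBot (𝓝 0) := by
  have h := (tendsto_poly_gauss_atTop (Q.comp (-X))).comp tendsto_neg_atBot_atTop
  refine h.congr fun x => ?_
  simp [Function.comp, eval_comp]

lemma isBigO_poly_gauss_atTop (Q : ℝ[X]) :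
    (fun x : ℝ => Q.eval x * Real.exp (-x ^ 2)) =O[atTop] fun x : ℝ => Real.exp (-x) := by
  rw [Asymptotics.isBigO_iff]
  refine ⟨1, ?_⟩
  have h := (NormedAddCommGroup.tendsto_nhds_zero.mp (tendsto_poly_gauss_gen Q 1)) 1 one_pos
  filter_upwards [h] with x hx
  have e1 : Q.eval x * Real.exp (-x ^ 2) = (Q.eval x * Real.exp (1 * x - x ^ 2)) * Real.exp (-x) := by
    rw [mul_assoc, ← Real.exp_add]; ring_nf
  rw [e1, norm_mul]
  have : ‖Real.exp (-x)‖ = Real.exp (-x) := Real.norm_eq_abs _ ▸ abs_of_pos (Real.exp_pos _)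
  rw [this]
  nlinarith [Real.exp_pos (-x), norm_nonneg (Q.eval x * Real.exp (1 * x - x ^ 2)), hx.le]

lemma isBigO_poly_gauss_atBot (Q : ℝ[X]) :
    (fun x : ℝ => Q.eval x * Real.exp (-x ^ 2)) =O[atBot] fun x : ℝ => Real.exp x := by
  have h := (isBigO_poly_gauss_atTop (Q.comp (-X))).comp_tendsto
    (tendsto_neg_atBot_atTop (G := ℝ))
  have e1 : ((fun x : ℝ => (Q.comp (-X)).eval x * Real.exp (-x ^ 2)) ∘ fun x : ℝ => -x) =
      fun x : ℝ => Q.eval x * Real.exp (-x ^ 2) := by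
    funext x; simp [Function.comp, eval_comp]
  have e2 : ((fun x : ℝ => Real.exp (-x)) ∘ fun x : ℝ => -x) = fun x : ℝ => Real.exp x := by
    funext x; simp [Function.comp]
  rwa [e1, e2] at h

lemma integrable_poly_gauss (Q : ℝ[X]) :
    Integrable fun x : ℝ => Q.eval x * Real.exp (-x ^ 2) := by
  apply LocallyIntegrable.integrable_of_isBigO_atBot_atTop
    (g := fun x : ℝ => Real.exp x) (g' := fun x : ℝ => Real.exp (-x))
  · exact (Q.continuous_aeval.mul (by continuity)).locallyIntegrable
  · exact isBigO_poly_gauss_atBot Q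
  · exact ⟨Set.Iic 0, Iic_mem_atBot 0, integrableOn_exp_Iic 0⟩
  · exact isBigO_poly_gauss_atTop Q
  · exact ⟨Set.Ioi 0, Ioi_mem_atTop 0, by simpa using exp_neg_integrableOn_Ioi 0 one_pos⟩

lemma hasDerivAt_poly_gauss (Q : ℝ[X]) (x : ℝ) :
    HasDerivAt (fun x : ℝ => Q.eval x * Real.exp (-x ^ 2))
      ((Q.derivative - 2 * X * Q).eval x * Real.exp (-x ^ 2)) x := by
  have h1 : HasDerivAt (fun x : ℝ => Q.eval x) (Q.derivative.eval x) x := Q.hasDerivAt x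
  have h0 : HasDerivAt (fun x : ℝ => -x ^ 2) (-(2 * x)) x := by
    simpa using (hasDerivAt_pow 2 x).fun_neg
  have h2 := h0.exp
  refine (h1.fun_mul h2).congr_deriv ?_
  simp [Real.exp_ne_zero]
  ring

lemma integral_deriv_gauss (Q : ℝ[X]) :
    ∫ x : ℝ, (Q.derivative - 2 * X * Q).eval x * Real.exp (-x ^ 2) = 0 := by
  set D := Q.derivative - 2 * X * Q with hD
  have hF : ∀ x : ℝ, HasDerivAt (fun x : ℝ => Q.eval x * Real.exp (-x ^ 2))
      (D.eval x * Real.exp (-x ^ 2)) x := fun x => hasDerivAt_poly_gauss Q x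
  have hint : Integrable fun x : ℝ => D.eval x * Real.exp (-x ^ 2) := integrable_poly_gauss D
  have h1 : ∫ x in Set.Iic (0:ℝ), D.eval x * Real.exp (-x ^ 2) =
      Q.eval 0 * Real.exp (-(0:ℝ) ^ 2) - 0 :=
    MeasureTheory.integral_Iic_of_hasDerivAt_of_tendsto' (fun x _ => hF x)
      hint.integrableOn (tendsto_poly_gauss_atBot Q)
  have h2 : ∫ x in Set.Ioi (0:ℝ), D.eval x * Real.exp (-x ^ 2) =
      0 - Q.eval 0 * Real.exp (-(0:ℝ) ^ 2) :=
    MeasureTheory.integral_Ioi_of_hasDerivAt_of_tendsto' (fun x _ => hF x)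
      hint.integrableOn (tendsto_poly_gauss_atTop Q)
  have h3 := MeasureTheory.integral_add_compl (measurableSet_Iic (a := (0:ℝ))) hint
  rw [Set.compl_Iic] at h3
  rw [← h3, h1, h2]; ring

/-- The Hermite inner products. -/
noncomputable def Aint (j k : ℕ) : ℝ :=
  ∫ x : ℝ, (PH j).eval x * (PH k).eval x * Real.exp (-x ^ 2)

lemma Aint_symm (j k : ℕ) : Aint j k = Aint k j := by
  unfold Aint
  congr 1; funext x; ring

lemma Aint_step (j k : ℕ) : Aint (j + 1) k = 2 * k * Aint j (k - 1) := by
  have key := integral_deriv_gauss (PH j * PH k)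
  have hder : (PH j * PH k).derivative - 2 * X * (PH j * PH k) =
      PH j * (PH k).derivative - PH (j + 1) * PH k := by
    rw [derivative_mul, PH_succ j]; ring
  rw [hder] at key
  have hint1 : Integrable fun x : ℝ => (PH j * (PH k).derivative).eval x * Real.exp (-x ^ 2) :=
    integrable_poly_gauss _
  have hint2 : Integrable fun x : ℝ => (PH (j + 1) * PH k).eval x * Real.exp (-x ^ 2) :=
    integrable_poly_gauss _
  have hsplit : ∫ x : ℝ, (PH j * (PH k).derivative - PH (j+1) * PH k).eval x * Real.exp (-x ^ 2)
      = (∫ x : ℝ, (PH j * (PH k).derivative).eval x * Real.exp (-x ^ 2)) -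
        ∫ x : ℝ, (PH (j + 1) * PH k).eval x * Real.exp (-x ^ 2) := by
    rw [← MeasureTheory.integral_sub hint1 hint2]
    congr 1; funext x; simp; ring
  rw [hsplit] at key
  have e2 : ∫ x : ℝ, (PH (j + 1) * PH k).eval x * Real.exp (-x ^ 2) = Aint (j + 1) k := by
    unfold Aint; congr 1; funext x; simp
  cases k with
  | zero =>
      have h0 : (PH 0).derivative = 0 := by simp [PH]
      rw [h0, mul_zero] at key
      simp only [eval_zero, zero_mul, MeasureTheory.integral_zero, zero_sub, neg_eq_zero] at key
      rw [e2] at key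
      rw [key]
      simp
  | succ l =>
      have : (PH (l + 1)).derivative = ((2 * (l + 1) : ℕ) : ℝ[X]) * PH l := PH_deriv l
      rw [this] at key
      have e1 : ∫ x : ℝ, (PH j * (((2 * (l + 1) : ℕ) : ℝ[X]) * PH l)).eval x * Real.exp (-x ^ 2)
          = 2 * (l + 1) * Aint j l := by
        unfold Aint
        rw [← MeasureTheory.integral_const_mul]
        congr 1; funext x; simp; push_cast; ring
      rw [e1, e2] at key
      have hl : l + 1 - 1 = l := rfl
      rw [hl]
      push_cast
      linarith

lemma Aint_zero : ∀ j k : ℕ, k < j → Aint j k = 0 := by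
  intro j
  induction j with
  | zero => intro k hk; omega
  | succ i ih =>
      intro k hk
      rw [Aint_step]
      cases k with
      | zero => simp
      | succ l =>
          rw [show l + 1 - 1 = l from rfl, ih l (by omega)]
          ring

lemma Aint_diag : ∀ n : ℕ, Aint n n = 2 ^ n * n.factorial * Real.sqrt Real.pi := by
  intro n
  induction n with
  | zero =>
      unfold Aint
      simp only [PH, eval_one, one_mul]
      have := integral_gaussian 1
      simp only [neg_mul, one_mul] at this
      simp [this, Nat.factorial]
  | succ i ih =>
      rw [Aint_step, show i + 1 - 1 = i from rfl, ih, Nat.factorial_succ]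
      push_cast
      ring

lemma integral_poly_gauss_add (P Q : ℝ[X]) :
    ∫ x : ℝ, (P + Q).eval x * Real.exp (-x ^ 2) =
      (∫ x : ℝ, P.eval x * Real.exp (-x ^ 2)) + ∫ x : ℝ, Q.eval x * Real.exp (-x ^ 2) := by
  rw [← MeasureTheory.integral_add (integrable_poly_gauss P) (integrable_poly_gauss Q)]
  congr 1; funext x; simp; ring

lemma integral_poly_gauss_smul (c : ℝ) (P : ℝ[X]) :
    ∫ x : ℝ, (C c * P).eval x * Real.exp (-x ^ 2) =
      c * ∫ x : ℝ, P.eval x * Real.exp (-x ^ 2) := by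
  rw [← MeasureTheory.integral_const_mul]
  congr 1; funext x; simp; ring

lemma Aint_eq (j k : ℕ) :
    ∫ x : ℝ, (PH j * PH k).eval x * Real.exp (-x ^ 2) = Aint j k := by
  unfold Aint; congr 1; funext x; simp

lemma Rint (n : ℕ) :
    ∫ u : ℝ, (((PH n).derivative - X * PH n).eval u) ^ 2 * Real.exp (-u ^ 2) =
      2 ^ n * n.factorial * Real.sqrt Real.pi * (2 * n + 1) / 2 := by
  set R : ℝ[X] := (PH n).derivative - X * PH n with hR
  set S : ℝ[X] := (PH n).derivative - PH (n + 1) with hS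
  have h2R : S = 2 * R := by
    rw [hS, hR, PH_succ n]; ring
  have hstep : ∫ u : ℝ, (R.eval u) ^ 2 * Real.exp (-u ^ 2) =
      (1 / 4) * ∫ u : ℝ, (S * S).eval u * Real.exp (-u ^ 2) := by
    rw [← MeasureTheory.integral_const_mul]
    congr 1; funext u
    rw [eval_mul, h2R]
    simp
    ring
  rw [hstep]
  cases n with
  | zero =>
      have hS0 : S * S = PH 1 * PH 1 := by
        rw [hS, show (PH 0).derivative = 0 by simp [PH]]
        ring
      rw [hS0, Aint_eq, Aint_diag]
      simp [Nat.factorial]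
      ring
  | succ k =>
      have hd : (PH (k + 1)).derivative = ((2 * (k + 1) : ℕ) : ℝ[X]) * PH k := PH_deriv k
      have hSS : S * S = C ((2 * (k + 1) : ℕ) ^ 2 : ℝ) * (PH k * PH k) +
          (C (-(2 * (2 * (k + 1) : ℕ)) : ℝ) * (PH (k + 2) * PH k) +
            PH (k + 2) * PH (k + 2)) := by
        rw [hS, hd]
        push_cast
        simp only [map_add, map_mul, map_pow, map_neg, map_ofNat, map_natCast, map_one]
        ring
      rw [hSS, integral_poly_gauss_add, integral_poly_gauss_smul, integral_poly_gauss_add,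
        integral_poly_gauss_smul, Aint_eq, Aint_eq, Aint_eq, Aint_diag, Aint_diag,
        Aint_zero (k + 2) k (by omega)]
      rw [Nat.factorial_succ (k + 1), Nat.factorial_succ k]
      push_cast
      ring

lemma exp_half_sq (y : ℝ) : (Real.exp (-y ^ 2 / 2)) ^ 2 = Real.exp (-y ^ 2) := by
  rw [← Real.exp_nat_mul]
  congr 1
  push_cast
  ring

theorem stmt_6 (μ m : ℝ) (hμ : 0 < μ) (n : ℕ) :
    4 * ∫ x : ℝ, (deriv (ψ μ m n) x) ^ 2 = (4 * (n : ℝ) + 2) * μ := by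
  have hs : 0 < Real.sqrt μ := Real.sqrt_pos.mpr hμ
  set s : ℝ := Real.sqrt μ with hsdef
  have hs2 : s ^ 2 = μ := Real.sq_sqrt hμ.le
  have hπ : (0:ℝ) < Real.sqrt Real.pi := Real.sqrt_pos.mpr Real.pi_pos
  have hden : (0:ℝ) < 2 ^ n * n.factorial * Real.sqrt Real.pi := by positivity
  set c : ℝ := Real.sqrt (s / (2 ^ n * n.factorial * Real.sqrt Real.pi)) with hcdef
  have hc2 : c ^ 2 = s / (2 ^ n * n.factorial * Real.sqrt Real.pi) :=
    Real.sq_sqrt (by positivity)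
  set R : ℝ[X] := (PH n).derivative - X * PH n with hRdef
  have hψ : ∀ x : ℝ, ψ μ m n x =
      c * (Real.exp (-(s * (x - m)) ^ 2 / 2) * (PH n).eval (s * (x - m))) := by
    intro x
    unfold ψ
    rw [hermiteH_eq]
    rw [show -(μ * (x - m) ^ 2) / 2 = -(s * (x - m)) ^ 2 / 2 by rw [← hs2]; ring]
    ring
  have hG : ∀ u : ℝ, HasDerivAt (fun u : ℝ => c * (Real.exp (-u ^ 2 / 2) * (PH n).eval u))
      (c * (Real.exp (-u ^ 2 / 2) * R.eval u)) u := by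
    intro u
    have h1 : HasDerivAt (fun u : ℝ => -u ^ 2 / 2) (-u) u := by
      have h1' := (hasDerivAt_pow 2 u).fun_neg.div_const 2
      refine h1'.congr_deriv ?_
      push_cast
      ring
    have h4 := (h1.exp.fun_mul ((PH n).hasDerivAt u)).const_mul c
    refine h4.congr_deriv ?_
    rw [hRdef]
    simp only [eval_sub, eval_mul, eval_X]
    ring
  have hcomp : ∀ x : ℝ, HasDerivAt (ψ μ m n)
      (s * (c * (Real.exp (-(s * (x - m)) ^ 2 / 2) * R.eval (s * (x - m))))) x := by
    intro x
    have hlin : HasDerivAt (fun x : ℝ => s * (x - m)) s x := by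
      simpa using ((hasDerivAt_id x).sub_const m).const_mul s
    have hcc := (hG (s * (x - m))).comp x hlin
    have heq : (fun u : ℝ => c * (Real.exp (-u ^ 2 / 2) * (PH n).eval u)) ∘
        (fun x : ℝ => s * (x - m)) = ψ μ m n := by
      funext y; simp only [Function.comp]; exact (hψ y).symm
    rw [heq] at hcc
    refine hcc.congr_deriv ?_; ring
  have h5 : ∫ x : ℝ, (deriv (ψ μ m n) x) ^ 2 =
      ∫ x : ℝ, s ^ 2 * c ^ 2 *
        ((fun u : ℝ => (R.eval u) ^ 2 * Real.exp (-u ^ 2)) (s * x + -(s * m))) := by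
    congr 1; funext x
    rw [(hcomp x).deriv, show s * x + -(s * m) = s * (x - m) by ring,
      show (s * (c * (Real.exp (-(s * (x - m)) ^ 2 / 2) * R.eval (s * (x - m))))) ^ 2 =
        s ^ 2 * c ^ 2 * ((R.eval (s * (x - m))) ^ 2 * (Real.exp (-(s * (x - m)) ^ 2 / 2)) ^ 2)
        from by ring, exp_half_sq]
  rw [h5, MeasureTheory.integral_const_mul,
    MeasureTheory.Measure.integral_comp_mul_left
      (fun y : ℝ => (fun u : ℝ => (R.eval u) ^ 2 * Real.exp (-u ^ 2)) (y + -(s * m))) s,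
    MeasureTheory.integral_add_right_eq_self
      (fun u : ℝ => (R.eval u) ^ 2 * Real.exp (-u ^ 2)) (-(s * m)),
    Rint n]
  rw [smul_eq_mul, abs_of_pos (inv_pos.mpr hs), hc2]
  field_simp
  rw [← hs2]
  ring
end

section
/- For every μ > 0 and m ∈ ℝ, the second central moment (risk) of the minimizing superposition ψ(x) = √(p_min)·ψ_0(x) + √(1−p_min)·ψ_2(x) with p_min = 1/2 + 1/√6 equals ∫_{−∞}^{∞} (x−m)²·|ψ(x)|² dx = μ^{−1}·(3/2 − 1/√6). -/
open MeasureTheory Real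

open Filter in
lemma integrable_pow_gauss {b : ℝ} (hb : 0 < b) (n : ℕ) :
    Integrable fun x : ℝ => x ^ n * Real.exp (-b * x ^ 2) := by
  simpa [Real.rpow_natCast] using
    integrable_rpow_mul_exp_neg_mul_sq hb (s := (n : ℝ))
      (neg_one_lt_zero.trans_le (Nat.cast_nonneg n))

open Filter in
lemma tendsto_pow_gauss {b : ℝ} (hb : 0 < b) (n : ℕ) :
    Tendsto (fun x : ℝ => x ^ n * Real.exp (-b * x ^ 2)) atTop (nhds 0) := by
  have h := rpow_mul_exp_neg_mul_sq_isLittleO_exp_neg hb (n : ℝ)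
  have h2 : Tendsto (fun x : ℝ => Real.exp (-(1/2) * x)) atTop (nhds 0) := by
    apply Real.tendsto_exp_atBot.comp
    exact Tendsto.const_mul_atTop_of_neg (by norm_num) tendsto_id
  have := h.isBigO.trans_tendsto h2
  simpa [Real.rpow_natCast] using this

open Filter in
lemma gauss_rec {b : ℝ} (hb : 0 < b) (n : ℕ) :
    ∫ x : ℝ, x ^ (n + 2) * Real.exp (-b * x ^ 2)
      = ((n : ℝ) + 1) / (2 * b) * ∫ x : ℝ, x ^ n * Real.exp (-b * x ^ 2) := by
  have hderiv : ∀ x : ℝ, HasDerivAt (fun x : ℝ => x ^ (n + 1) * Real.exp (-b * x ^ 2))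
      (((n : ℝ) + 1) * (x ^ n * Real.exp (-b * x ^ 2))
        - 2 * b * (x ^ (n + 2) * Real.exp (-b * x ^ 2))) x := by
    intro x
    have h1 : HasDerivAt (fun x : ℝ => x ^ (n + 1)) (((n : ℝ) + 1) * x ^ n) x := by
      simpa using hasDerivAt_pow (n + 1) x
    have h2 : HasDerivAt (fun x : ℝ => Real.exp (-b * x ^ 2))
        (Real.exp (-b * x ^ 2) * (-b * (2 * x))) x := by
      have h3 : HasDerivAt (fun x : ℝ => -b * x ^ 2) (-b * (2 * x)) x := by
        simpa using (hasDerivAt_pow 2 x).const_mul (-b)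
      exact h3.exp
    have := h1.fun_mul h2
    refine this.congr_deriv ?_
    ring
  have hint : Integrable (fun x : ℝ => ((n : ℝ) + 1) * (x ^ n * Real.exp (-b * x ^ 2))
      - 2 * b * (x ^ (n + 2) * Real.exp (-b * x ^ 2))) := by
    exact ((integrable_pow_gauss hb n).const_mul _).sub
      ((integrable_pow_gauss hb (n + 2)).const_mul _)
  have htop := tendsto_pow_gauss hb (n + 1)
  have hbot : Tendsto (fun x : ℝ => x ^ (n + 1) * Real.exp (-b * x ^ 2)) atBot (nhds 0) := by
    have h2 := ((tendsto_pow_gauss hb (n + 1)).comp tendsto_neg_atBot_atTop).const_mul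
      ((-1 : ℝ) ^ (n + 1))
    rw [mul_zero] at h2
    refine h2.congr fun x => ?_
    simp only [Function.comp]
    rw [neg_sq, ← mul_assoc, ← mul_pow]
    ring_nf
  have h0 := integral_of_hasDerivAt_of_tendsto hderiv hint hbot htop
  rw [sub_zero] at h0
  rw [integral_sub ((integrable_pow_gauss hb n).const_mul _)
      ((integrable_pow_gauss hb (n + 2)).const_mul _),
    MeasureTheory.integral_const_mul, MeasureTheory.integral_const_mul] at h0
  have hb' : (2 : ℝ) * b ≠ 0 := by positivity
  rw [div_mul_eq_mul_div, eq_div_iff hb']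
  linarith [h0]

theorem stmt_11 (μ m : ℝ) (hμ : 0 < μ) :
    ∫ x : ℝ, (x - m) ^ 2 *
        (Real.sqrt (1 / 2 + 1 / Real.sqrt 6) * ψ μ m 0 x
          + Real.sqrt (1 - (1 / 2 + 1 / Real.sqrt 6)) * ψ μ m 2 x) ^ 2
      = μ⁻¹ * (3 / 2 - 1 / Real.sqrt 6) := by
  have hsμ : 0 < Real.sqrt μ := Real.sqrt_pos.mpr hμ
  have hsπ : 0 < Real.sqrt π := Real.sqrt_pos.mpr Real.pi_pos
  have hs6 : 0 < Real.sqrt 6 := Real.sqrt_pos.mpr (by norm_num)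
  have hμ2 : Real.sqrt μ ^ 2 = μ := Real.sq_sqrt hμ.le
  have hπ2 : Real.sqrt π ^ 2 = π := Real.sq_sqrt Real.pi_pos.le
  have h62 : Real.sqrt 6 ^ 2 = 6 := Real.sq_sqrt (by norm_num)
  have h2s6 : (2 : ℝ) ≤ Real.sqrt 6 := by nlinarith
  have hq0 : (0 : ℝ) ≤ 1 - (1 / 2 + 1 / Real.sqrt 6) := by
    have h1 : 1 / Real.sqrt 6 ≤ 1 / 2 := by
      rw [div_le_div_iff₀ hs6 two_pos]; linarith
    linarith
  have hp0 : (0 : ℝ) ≤ 1 / 2 + 1 / Real.sqrt 6 := by positivity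
  set sμ := Real.sqrt μ with hsμdef
  set sπ := Real.sqrt π with hsπdef
  set s6 := Real.sqrt 6 with hs6def
  set a := Real.sqrt (1 / 2 + 1 / s6) with hadef
  set c := Real.sqrt (1 - (1 / 2 + 1 / s6)) with hcdef
  set K0 := a * Real.sqrt (sμ / sπ) with hK0def
  set K2 := c * Real.sqrt (sμ / (8 * sπ)) with hK2def
  -- pointwise identity
  have key : ∀ x : ℝ,
      (x - m) ^ 2 * (a * ψ μ m 0 x + c * ψ μ m 2 x) ^ 2
      = (K0 - 2 * K2) ^ 2 * ((x - m) ^ 2 * Real.exp (-μ * (x - m) ^ 2))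
        + 8 * μ * K2 * (K0 - 2 * K2) * ((x - m) ^ 4 * Real.exp (-μ * (x - m) ^ 2))
        + 16 * μ ^ 2 * K2 ^ 2 * ((x - m) ^ 6 * Real.exp (-μ * (x - m) ^ 2)) := by
    intro x
    have hE : Real.exp (-(μ * (x - m) ^ 2) / 2) ^ 2 = Real.exp (-(μ * (x - m) ^ 2)) := by
      rw [← Real.exp_nat_mul]; congr 1; push_cast; ring
    have hz : (sμ * (x - m)) ^ 2 = μ * (x - m) ^ 2 := by rw [mul_pow, hμ2]
    rw [hK0def, hK2def]
    simp only [ψ, hermiteH]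
    norm_num [Nat.factorial, -Real.sqrt_div, -Real.sqrt_div']
    set y := x - m with hy
    rw [show 2 * (sμ * y) * (2 * (sμ * y)) = 4 * (μ * y ^ 2) by
      rw [show 2 * (sμ * y) * (2 * (sμ * y)) = 4 * (sμ * y) ^ 2 by ring, hz]]
    set E := Real.exp (-(μ * y ^ 2) / 2) with hEdef
    set e := Real.exp (-(μ * y ^ 2)) with hedef
    clear hy hEdef hedef hz
    clear_value y E e
    ring_nf
    rw [hE]
    ring
  -- translate and compute
  rw [show (fun x : ℝ => (x - m) ^ 2 * (a * ψ μ m 0 x + c * ψ μ m 2 x) ^ 2)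
      = fun x : ℝ => (fun y : ℝ =>
          (K0 - 2 * K2) ^ 2 * (y ^ 2 * Real.exp (-μ * y ^ 2))
          + 8 * μ * K2 * (K0 - 2 * K2) * (y ^ 4 * Real.exp (-μ * y ^ 2))
          + 16 * μ ^ 2 * K2 ^ 2 * (y ^ 6 * Real.exp (-μ * y ^ 2))) (x - m)
    from funext key]
  rw [integral_sub_right_eq_self (μ := volume) (fun y : ℝ =>
          (K0 - 2 * K2) ^ 2 * (y ^ 2 * Real.exp (-μ * y ^ 2))
          + 8 * μ * K2 * (K0 - 2 * K2) * (y ^ 4 * Real.exp (-μ * y ^ 2))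
          + 16 * μ ^ 2 * K2 ^ 2 * (y ^ 6 * Real.exp (-μ * y ^ 2))) m]
  have hiA : Integrable (fun x : ℝ => (K0 - 2 * K2) ^ 2 * (x ^ 2 * Real.exp (-μ * x ^ 2))) :=
    (integrable_pow_gauss hμ 2).const_mul _
  have hiB : Integrable (fun x : ℝ =>
      8 * μ * K2 * (K0 - 2 * K2) * (x ^ 4 * Real.exp (-μ * x ^ 2))) :=
    (integrable_pow_gauss hμ 4).const_mul _
  have hiC : Integrable (fun x : ℝ => 16 * μ ^ 2 * K2 ^ 2 * (x ^ 6 * Real.exp (-μ * x ^ 2))) :=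
    (integrable_pow_gauss hμ 6).const_mul _
  have hiAB : Integrable (fun x : ℝ =>
      (K0 - 2 * K2) ^ 2 * (x ^ 2 * Real.exp (-μ * x ^ 2))
        + 8 * μ * K2 * (K0 - 2 * K2) * (x ^ 4 * Real.exp (-μ * x ^ 2))) := hiA.add hiB
  rw [integral_add hiAB hiC, integral_add hiA hiB,
    MeasureTheory.integral_const_mul, MeasureTheory.integral_const_mul,
    MeasureTheory.integral_const_mul]
  -- values of the moments
  have hI0 : ∫ x : ℝ, Real.exp (-μ * x ^ 2) = sπ / sμ := by
    rw [integral_gaussian, hsπdef, hsμdef, ← Real.sqrt_div Real.pi_pos.le]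
  have hI2 : ∫ x : ℝ, x ^ 2 * Real.exp (-μ * x ^ 2) = 1 / (2 * μ) * (sπ / sμ) := by
    have h := gauss_rec hμ 0
    simp only [zero_add, Nat.cast_zero, pow_zero, one_mul] at h
    rw [h, hI0]
  have hI4 : ∫ x : ℝ, x ^ 4 * Real.exp (-μ * x ^ 2) = 3 / (2 * μ) * (1 / (2 * μ) * (sπ / sμ)) := by
    have h := gauss_rec hμ 2
    simp only [Nat.reduceAdd, Nat.cast_ofNat] at h
    rw [h, hI2]
    ring
  have hI6 : ∫ x : ℝ, x ^ 6 * Real.exp (-μ * x ^ 2)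
      = 5 / (2 * μ) * (3 / (2 * μ) * (1 / (2 * μ) * (sπ / sμ))) := by
    have h := gauss_rec hμ 4
    simp only [Nat.reduceAdd, Nat.cast_ofNat] at h
    rw [h, hI4]
    ring
  rw [hI2, hI4, hI6]
  -- algebraic values
  have ha2 : a ^ 2 = 1 / 2 + 1 / s6 := Real.sq_sqrt hp0
  have hc2 : c ^ 2 = 1 - (1 / 2 + 1 / s6) := Real.sq_sqrt hq0
  have hC0sq : Real.sqrt (sμ / sπ) ^ 2 = sμ / sπ := Real.sq_sqrt (by positivity)
  have hC2sq : Real.sqrt (sμ / (8 * sπ)) ^ 2 = sμ / (8 * sπ) := Real.sq_sqrt (by positivity)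
  have hK0sq : K0 ^ 2 = (1 / 2 + 1 / s6) * (sμ / sπ) := by
    rw [hK0def, mul_pow, ha2, hC0sq]
  have hK2sq : K2 ^ 2 = (1 - (1 / 2 + 1 / s6)) * (sμ / (8 * sπ)) := by
    rw [hK2def, mul_pow, hc2, hC2sq]
  have hK0K2 : K0 * K2 = sμ / (4 * s6 * sπ) := by
    rw [hK0def, hK2def, hadef, hcdef]
    rw [show Real.sqrt (1 / 2 + 1 / s6) * Real.sqrt (sμ / sπ)
        * (Real.sqrt (1 - (1 / 2 + 1 / s6)) * Real.sqrt (sμ / (8 * sπ)))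
      = (Real.sqrt (1 / 2 + 1 / s6) * Real.sqrt (1 - (1 / 2 + 1 / s6)))
        * (Real.sqrt (sμ / sπ) * Real.sqrt (sμ / (8 * sπ))) by ring]
    rw [← Real.sqrt_mul hp0, ← Real.sqrt_mul (by positivity : (0:ℝ) ≤ sμ / sπ),
      ← Real.sqrt_mul (by positivity)]
    rw [show (1 / 2 + 1 / s6) * (1 - (1 / 2 + 1 / s6)) * (sμ / sπ * (sμ / (8 * sπ)))
        = (sμ / (4 * s6 * sπ)) ^ 2 by
      field_simp
      linear_combination 16 * h62]
    exact Real.sqrt_sq (by positivity)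
  have e1 : (K0 - 2 * K2) ^ 2 * (1 / (2 * μ) * (sπ / sμ))
      + 8 * μ * K2 * (K0 - 2 * K2) * (3 / (2 * μ) * (1 / (2 * μ) * (sπ / sμ)))
      + 16 * μ ^ 2 * K2 ^ 2 * (5 / (2 * μ) * (3 / (2 * μ) * (1 / (2 * μ) * (sπ / sμ))))
      = K0 ^ 2 * (1 / (2 * μ) * (sπ / sμ))
        + K0 * K2 * (8 * μ * (3 / (2 * μ) * (1 / (2 * μ) * (sπ / sμ)))
            - 4 * (1 / (2 * μ) * (sπ / sμ)))
        + K2 ^ 2 * (4 * (1 / (2 * μ) * (sπ / sμ))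
            - 16 * μ * (3 / (2 * μ) * (1 / (2 * μ) * (sπ / sμ)))
            + 16 * μ ^ 2 * (5 / (2 * μ) * (3 / (2 * μ) * (1 / (2 * μ) * (sπ / sμ))))) := by
    ring
  rw [e1, hK0sq, hK2sq, hK0K2]
  have hμ0 : μ ≠ 0 := hμ.ne'
  field_simp
  ring
end
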